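/- Let A be a commutative domain of characteristic zero and ∂ a locally nilpotent derivation on A. For a ∈ A, if ∂(a) belongs to the principal ideal (a), then ∂(a) = 0. -/

import Mathlib

def IsLND {R A : Type*} [CommRing R] [CommRing A] [Algebra R A]
    (D : Derivation R A A) : Prop :=
  ∀ a : A, ∃ n : ℕ, (⇑D)^[n] a = 0

/-!
For `x ≠ 0` let `ν x` be the largest `n` with `D^[n] x ≠ 0`. By the Leibniz rule,
`D^[ν x + ν y] (x * y) = (ν x + ν y).choose (ν x) • (D^[ν x] x * D^[ν y] y)`, which is nonzero in a
domain of characteristic zero, so `ν (x * y) ≥ ν x + ν y`. If `D a = c * a ≠ 0`, this gives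
`ν (D a) ≥ ν c + ν a ≥ ν a`, whereas clearly `ν (D a) = ν a - 1`.
-/

namespace Function

variable {α : Type*} {f : α → α} {x b : α} {N : ℕ}

theorem IsFixedPt.iterate_eq_of_le (hb : IsFixedPt f b) (hN : f^[N] x = b) {M : ℕ}
    (hNM : N ≤ M) : f^[M] x = b := by
  obtain ⟨k, rfl⟩ := Nat.exists_eq_add_of_le hNM
  rw [add_comm, iterate_add_apply, hN, hb.iterate]

theorem exists_iterate_ne_and_iterate_succ_eq (hx : x ≠ b) (hN : f^[N] x = b) :
    ∃ n, f^[n] x ≠ b ∧ f^[n + 1] x = b := by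
  by_contra! h
  have hne : ∀ n, f^[n] x ≠ b := fun n => by
    induction n with
    | zero => exact hx
    | succ n ih => exact h n ih
  exact hne N hN

end Function

namespace Derivation

open Finset

variable {R A : Type*} [CommSemiring R] [CommSemiring A] [Algebra R A] (D : Derivation R A A)

theorem iterate_leibniz (n : ℕ) (a b : A) :
    (⇑D)^[n] (a * b) = ∑ ij ∈ antidiagonal n, n.choose ij.1 • ((⇑D)^[ij.1] a * (⇑D)^[ij.2] b) := by
  induction n with
  | zero => simp
  | succ n ih =>
    rw [sum_antidiagonal_choose_succ_nsmul (M := A) (fun i j => (⇑D)^[i] a * (⇑D)^[j] b) n]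
    simp only [Function.iterate_succ_apply', ih, map_sum, map_nsmul, leibniz, smul_eq_mul,
      smul_add, sum_add_distrib]
    congr 1
    refine sum_congr rfl fun ⟨i, j⟩ hij ↦ ?_
    rw [n.choose_symm_of_eq_add (HasAntidiagonal.mem_antidiagonal.1 hij).symm]
    ring

theorem iterate_mul_of_iterate_succ_eq_zero {m n : ℕ} {a b : A} (ha : (⇑D)^[m + 1] a = 0)
    (hb : (⇑D)^[n + 1] b = 0) :
    (⇑D)^[m + n] (a * b) = (m + n).choose m • ((⇑D)^[m] a * (⇑D)^[n] b) := by
  have hD0 : Function.IsFixedPt D 0 := D.map_zero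
  rw [iterate_leibniz, sum_eq_single_of_mem (m, n) (HasAntidiagonal.mem_antidiagonal.2 rfl)]
  rintro ⟨i, j⟩ hij hne
  rw [HasAntidiagonal.mem_antidiagonal] at hij
  obtain hi | hj : m < i ∨ n < j := by
    by_contra! hle
    exact hne (Prod.ext (by omega) (by omega))
  · rw [hD0.iterate_eq_of_le ha hi, zero_mul, smul_zero]
  · rw [hD0.iterate_eq_of_le hb hj, mul_zero, smul_zero]

end Derivation

/-- For a locally nilpotent derivation `D` on a domain of characteristic zero,
if `D a` lies in the principal ideal `(a)` then `D a = 0`. -/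
theorem stmt2 {A : Type*} [CommRing A] [IsDomain A] [Algebra ℚ A]
    (D : Derivation ℚ A A) (hD : IsLND D) (a : A)
    (h : D a ∈ Ideal.span ({a} : Set A)) :
    D a = 0 := by
  have : CharZero A := charZero_of_injective_algebraMap (algebraMap ℚ A).injective
  by_contra hne
  obtain ⟨c, hc⟩ := Ideal.mem_span_singleton'.mp h
  have ha : a ≠ 0 := by rintro rfl; exact hne D.map_zero
  have hc0 : c ≠ 0 := by rintro rfl; exact hne (by rw [← hc, zero_mul])
  obtain ⟨m, hm, hm'⟩ := Function.exists_iterate_ne_and_iterate_succ_eq hc0 (hD c).choose_spec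
  obtain ⟨n, hn, hn'⟩ := Function.exists_iterate_ne_and_iterate_succ_eq ha (hD a).choose_spec
  have hprod := D.iterate_mul_of_iterate_succ_eq_zero hm' hn'
  have hzero : (⇑D)^[m + n] (c * a) = 0 := by
    rw [hc, ← Function.iterate_succ_apply]
    exact (show Function.IsFixedPt D 0 from D.map_zero).iterate_eq_of_le hn' (by omega)
  rw [hzero, eq_comm, smul_eq_zero] at hprod
  exact hprod.elim (Nat.choose_pos (by omega)).ne' (mul_ne_zero hm hn)
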